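/- Let T be a finite set of n time series, x ∈ T, and k ≤ n an integer with k ≥ 1. Let B be a regularized band with B ≠ T and |B| ≤ k − √n, and let B′ be the adjacent regularized band (the smallest regularized band strictly containing B). Let r = min { Score₁(O) : O ⊆ T, x ∈ O, |O| = k } be the optimal confidence-band area for size k. Then Score₁(B′) ≤ (1 + √n) · r. -/

import Mathlib

open Finset
open scoped Classical

/-! Let `O` be an optimal band of size `k` and `n = |T|`. Comparing `B` with `O` at its parameter
`α_B` and using `|B| ≤ k - √n` gives `α_B √n ≤ Score₁(O)`. At `α₀ = √n · Score₁(O) / (n - k) > α_B`,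
`O` beats `B`, so by the chain property the band `W` for `α₀` strictly contains `B`, whence
`B' ⊆ W`; comparing `W` with `O` gives `Score₁(W) ≤ Score₁(O) + α₀ (n - k) = (1 + √n) Score₁(O)`.
If `k = n` then `O = T ⊇ B'` directly. The chain property itself comes from submodularity of
`Score₁`: the envelope of `U ∪ V` is the pointwise max/min of those of `U` and `V`. -/

/-- The envelope-area score of a finite set `U` of time series over a finite domain `D`:
`Score₁(U) = ∑_{i ∈ D} (max_{t ∈ U} t(i) − min_{t ∈ U} t(i))`. -/
noncomputable def score1 {D : Type*} [Fintype D] (U : Finset (D → ℝ)) : ℝ :=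
  ∑ i : D, (sSup ((fun f => f i) '' (U : Set (D → ℝ))) -
            sInf ((fun f => f i) '' (U : Set (D → ℝ))))

/-- The regularized score `Reg(U;α) = Score₁(U) − α|U|`. -/
noncomputable def reg {D : Type*} [Fintype D] (α : ℝ) (U : Finset (D → ℝ)) : ℝ :=
  score1 U - α * U.card

/-- `U` is the regularized band of `T` (with seed `x ∈ U`) for the parameter `α`:
it minimizes `Reg(·;α) = Score₁(·) − α|·|` over all subsets of `T` containing `x`,
and has maximum cardinality among such minimizers (ties broken towards larger sets). -/
def IsRegBand {D : Type*} [Fintype D] (T : Finset (D → ℝ)) (x : D → ℝ) (α : ℝ)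
    (U : Finset (D → ℝ)) : Prop :=
  U ⊆ T ∧ x ∈ U ∧
  (∀ V ⊆ T, x ∈ V → reg α U ≤ reg α V) ∧
  (∀ V ⊆ T, x ∈ V → reg α V = reg α U → V.card ≤ U.card)

section Envelope

variable {α : Type*} {g : α → ℝ} {U V : Finset α}

lemma sInf_image_le_sSup_image (g : α → ℝ) (U : Finset α) :
    sInf (g '' U) ≤ sSup (g '' U) :=
  Real.sInf_le_sSup _ (U.finite_toSet.image g).bddBelow (U.finite_toSet.image g).bddAbove

lemma sSup_image_mono (hU : U.Nonempty) (hUV : U ⊆ V) : sSup (g '' U) ≤ sSup (g '' V) :=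
  csSup_le_csSup (V.finite_toSet.image g).bddAbove (hU.to_set.image g)
    (Set.image_mono (coe_subset.mpr hUV))

lemma sInf_image_mono (hU : U.Nonempty) (hUV : U ⊆ V) : sInf (g '' V) ≤ sInf (g '' U) :=
  csInf_le_csInf (V.finite_toSet.image g).bddBelow (hU.to_set.image g)
    (Set.image_mono (coe_subset.mpr hUV))

variable [DecidableEq α]

lemma sSup_image_inter_add_sSup_image_union_le (h : (U ∩ V).Nonempty) :
    sSup (g '' ↑(U ∩ V)) + sSup (g '' ↑(U ∪ V)) ≤ sSup (g '' U) + sSup (g '' V) := by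
  have hU := sSup_image_mono (g := g) h inter_subset_left
  have hV := sSup_image_mono (g := g) h inter_subset_right
  rw [coe_union, Set.image_union, csSup_union (U.finite_toSet.image g).bddAbove
    ((h.mono inter_subset_left).to_set.image g) (V.finite_toSet.image g).bddAbove
    ((h.mono inter_subset_right).to_set.image g)]
  rcases le_total (sSup (g '' U)) (sSup (g '' V)) with hle | hle
  · rw [sup_eq_right.mpr hle]; linarith
  · rw [sup_eq_left.mpr hle]; linarith

lemma sInf_image_add_sInf_image_le_inter_add_union (h : (U ∩ V).Nonempty) :
    sInf (g '' U) + sInf (g '' V) ≤ sInf (g '' ↑(U ∩ V)) + sInf (g '' ↑(U ∪ V)) := by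
  have hU := sInf_image_mono (g := g) h inter_subset_left
  have hV := sInf_image_mono (g := g) h inter_subset_right
  rw [coe_union, Set.image_union, csInf_union (U.finite_toSet.image g).bddBelow
    ((h.mono inter_subset_left).to_set.image g) (V.finite_toSet.image g).bddBelow
    ((h.mono inter_subset_right).to_set.image g)]
  rcases le_total (sInf (g '' U)) (sInf (g '' V)) with hle | hle
  · rw [inf_eq_left.mpr hle]; linarith
  · rw [inf_eq_right.mpr hle]; linarith

end Envelope

section Score

variable {D : Type*} [Fintype D]

lemma score1_nonneg (U : Finset (D → ℝ)) : 0 ≤ score1 U :=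
  sum_nonneg fun _ _ => sub_nonneg.mpr (sInf_image_le_sSup_image _ U)

lemma score1_mono {U V : Finset (D → ℝ)} (hUV : U ⊆ V) : score1 U ≤ score1 V := by
  rcases U.eq_empty_or_nonempty with rfl | hU
  · simpa [score1] using score1_nonneg V
  · exact sum_le_sum fun i _ => by
      linarith [sSup_image_mono (g := fun f => f i) hU hUV,
        sInf_image_mono (g := fun f => f i) hU hUV]

lemma score1_inter_add_score1_union_le {U V : Finset (D → ℝ)} (h : (U ∩ V).Nonempty) :
    score1 (U ∩ V) + score1 (U ∪ V) ≤ score1 U + score1 V := by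
  unfold score1
  rw [← sum_add_distrib, ← sum_add_distrib]
  refine sum_le_sum fun i _ => ?_
  have hSup := sSup_image_inter_add_sSup_image_union_le (g := fun f : D → ℝ => f i) h
  have hInf := sInf_image_add_sInf_image_le_inter_add_union (g := fun f : D → ℝ => f i) h
  linarith

variable {T : Finset (D → ℝ)} {x : D → ℝ} {α β : ℝ} {U W B : Finset (D → ℝ)}

lemma IsRegBand.score1_le (hU : IsRegBand T x α U) {V : Finset (D → ℝ)} (hVT : V ⊆ T)
    (hxV : x ∈ V) : score1 U ≤ score1 V + α * ((U.card : ℝ) - V.card) := by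
  have := hU.2.2.1 V hVT hxV
  simp only [reg] at this
  linarith

lemma exists_isRegBand {V : Finset (D → ℝ)} (hVT : V ⊆ T) (hxV : x ∈ V) (α : ℝ) :
    ∃ W, IsRegBand T x α W := by
  set F := T.powerset.filter (x ∈ ·)
  have hmemF : ∀ V, V ∈ F ↔ V ⊆ T ∧ x ∈ V := by simp [F]
  obtain ⟨U₀, hU₀F, hU₀min⟩ := F.exists_min_image (reg α) ⟨V, (hmemF V).mpr ⟨hVT, hxV⟩⟩
  obtain ⟨W, hWF, hWmax⟩ := (F.filter (reg α · = reg α U₀)).exists_max_image card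
    ⟨U₀, mem_filter.mpr ⟨hU₀F, rfl⟩⟩
  obtain ⟨hWF, hWreg⟩ := mem_filter.mp hWF
  obtain ⟨hWT, hxW⟩ := (hmemF W).mp hWF
  refine ⟨W, hWT, hxW, fun V hVT hxV => ?_, fun V hVT hxV hreg => ?_⟩
  · exact hWreg ▸ hU₀min V ((hmemF V).mpr ⟨hVT, hxV⟩)
  · exact hWmax V (mem_filter.mpr ⟨(hmemF V).mpr ⟨hVT, hxV⟩, hreg.trans hWreg⟩)

/-- By submodularity of `score1`, minimality alone gives
`α |U ∩ W| + β |U ∪ W| ≤ α |U| + β |W|`, which forces `|U| ≤ |U ∩ W|` when `α < β`. -/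
lemma IsRegBand.subset_of_lt (hαβ : α < β) (hU : IsRegBand T x α U)
    (hW : IsRegBand T x β W) : U ⊆ W := by
  have hxUW : x ∈ U ∩ W := mem_inter.mpr ⟨hU.2.1, hW.2.1⟩
  have h₁ := hU.2.2.1 _ (inter_subset_left.trans hU.1) hxUW
  have h₂ := hW.2.2.1 _ (union_subset hU.1 hW.1) (mem_union_left W hU.2.1)
  have h₃ := score1_inter_add_score1_union_le ⟨x, hxUW⟩
  have hcard : ((U ∩ W).card : ℝ) + (U ∪ W).card = U.card + W.card := by
    exact_mod_cast card_inter_add_card_union U W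
  simp only [reg] at h₁ h₂
  have hle : (U.card : ℝ) ≤ (U ∩ W).card := by
    by_contra! hlt
    nlinarith [mul_pos (sub_pos.mpr hαβ) (sub_pos.mpr hlt), congrArg (β * ·) hcard]
  exact inter_eq_left.mp (eq_of_subset_of_card_le inter_subset_left (by exact_mod_cast hle))

lemma IsRegBand.ssubset_of_lt_of_reg_lt (hαβ : α < β) (hU : IsRegBand T x α U)
    (hW : IsRegBand T x β W) {V : Finset (D → ℝ)} (hVT : V ⊆ T) (hxV : x ∈ V)
    (hV : reg β V < reg β U) : U ⊂ W := by
  refine (hU.subset_of_lt hαβ hW).ssubset_of_ne ?_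
  rintro rfl
  exact (hW.2.2.1 V hVT hxV).not_gt hV

lemma IsRegBand.exists_ssuperset_score1_le (hB : IsRegBand T x α B) (hαβ : α < β)
    {O : Finset (D → ℝ)} (hOT : O ⊆ T) (hxO : x ∈ O)
    (hO : score1 O < β * ((O.card : ℝ) - B.card)) :
    ∃ W, IsRegBand T x β W ∧ B ⊂ W ∧ score1 W ≤ score1 O + β * ((T.card : ℝ) - O.card) := by
  obtain ⟨W, hW⟩ := exists_isRegBand hOT hxO β
  have hβ : 0 < β := by
    by_contra! hβ
    nlinarith [score1_nonneg O, hB.score1_le hOT hxO, score1_nonneg B]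
  have hOB : reg β O < reg β B := by
    simp only [reg]
    linarith [score1_nonneg B]
  refine ⟨W, hW, hB.ssubset_of_lt_of_reg_lt hαβ hW hOT hxO hOB, ?_⟩
  have hWT : (W.card : ℝ) ≤ T.card := by exact_mod_cast card_le_card hW.1
  nlinarith [hW.score1_le hOT hxO]

end Score

theorem findsum_case_small_band_general {D : Type*} [Fintype D]
    (T : Finset (D → ℝ)) (x : D → ℝ)
    (k : ℕ) (hk1 : 1 ≤ k) (hkn : k ≤ T.card)
    (B B' : Finset (D → ℝ))
    (hB : ∃ α : ℝ, 0 < α ∧ IsRegBand T x α B)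
    (hBk : (B.card : ℝ) ≤ (k : ℝ) - Real.sqrt (T.card : ℝ))
    (hB' : ∃ α : ℝ, 0 < α ∧ IsRegBand T x α B')
    (hadj : ∀ W : Finset (D → ℝ), (∃ α : ℝ, 0 < α ∧ IsRegBand T x α W) → B ⊂ W → B' ⊆ W)
    (r : ℝ)
    (hr : IsLeast {s : ℝ | ∃ O : Finset (D → ℝ), O ⊆ T ∧ x ∈ O ∧ O.card = k ∧ s = score1 O} r) :
    score1 B' ≤ (1 + Real.sqrt (T.card : ℝ)) * r := by
  obtain ⟨αB, hαB, hBband⟩ := hB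
  obtain ⟨-, -, hB'T, -⟩ := hB'
  obtain ⟨O, hOT, hxO, rfl, rfl⟩ := hr.1
  set s := √(T.card : ℝ)
  have hs_sq : s * s = T.card := Real.mul_self_sqrt (Nat.cast_nonneg _)
  have hs_pos : 0 < s := Real.sqrt_pos.mpr (by exact_mod_cast card_pos.mpr ⟨x, hOT hxO⟩)
  have hαB_le : αB * s ≤ score1 O := by
    nlinarith [score1_nonneg B, hBband.score1_le hOT hxO]
  have hO_pos : 0 < score1 O := (mul_pos hαB hs_pos).trans_le hαB_le
  rcases hkn.eq_or_lt with hOT_card | hOT_card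
  · calc score1 B' ≤ score1 O := score1_mono (eq_of_subset_of_card_le hOT hOT_card.ge ▸ hB'T)
      _ ≤ _ := by nlinarith
  · have hd : (0 : ℝ) < T.card - O.card := sub_pos.mpr (by exact_mod_cast hOT_card)
    have hk : (1 : ℝ) ≤ O.card := by exact_mod_cast hk1
    -- Any `α₀ > αB` with `score1 O < α₀ s` would do; this one makes the bound exact.
    set α₀ := s * score1 O / (T.card - O.card)
    have hα₀ : α₀ * (T.card - O.card) = s * score1 O := div_mul_cancel₀ _ hd.ne'
    have hαB_lt : αB < α₀ := lt_of_mul_lt_mul_right (by nlinarith) hd.le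
    have hO_lt : score1 O < α₀ * s := lt_of_mul_lt_mul_right (by nlinarith) hd.le
    obtain ⟨W, hW, hBW, hWO⟩ :=
      hBband.exists_ssuperset_score1_le hαB_lt hOT hxO (by nlinarith)
    calc score1 B' ≤ score1 W := score1_mono (hadj W ⟨α₀, hαB.trans hαB_lt, hW⟩ hBW)
      _ ≤ score1 O + α₀ * (T.card - O.card) := hWO
      _ = (1 + s) * score1 O := by rw [hα₀]; ring

/-- Let `T` be a set of `n` time series with seed `x ∈ T` and let `1 ≤ k ≤ n`. Let `B` be a
regularized band with `B ≠ T` and `|B| ≤ k − √n`, and let `B'` be the adjacent regularized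
band (the smallest regularized band strictly containing `B`). If `r` is the optimal
confidence-band area `min { Score₁(O) : O ⊆ T, x ∈ O, |O| = k }`,
then `Score₁(B') ≤ (1 + √n)·r`. -/
theorem findsum_case_small_band {D : Type*} [Fintype D] [Nonempty D]
    (T : Finset (D → ℝ)) (x : D → ℝ) (hx : x ∈ T)
    (k : ℕ) (hk1 : 1 ≤ k) (hkn : k ≤ T.card)
    (B B' : Finset (D → ℝ))
    (hB : ∃ α : ℝ, 0 < α ∧ IsRegBand T x α B) (hBT : B ≠ T)
    (hBk : (B.card : ℝ) ≤ (k : ℝ) - Real.sqrt (T.card : ℝ))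
    (hB' : ∃ α : ℝ, 0 < α ∧ IsRegBand T x α B') (hBB' : B ⊂ B')
    (hadj : ∀ W : Finset (D → ℝ), (∃ α : ℝ, 0 < α ∧ IsRegBand T x α W) → B ⊂ W → B' ⊆ W)
    (r : ℝ)
    (hr : IsLeast {s : ℝ | ∃ O : Finset (D → ℝ), O ⊆ T ∧ x ∈ O ∧ O.card = k ∧ s = score1 O} r) :
    score1 B' ≤ (1 + Real.sqrt (T.card : ℝ)) * r :=
  findsum_case_small_band_general T x k hk1 hkn B B' hB hBk hB' hadj r hr
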